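/- In the counter-model M, for every a ∈ Mₙ and b₁,…,bₙ ∈ Mₚ, the involution commutes with composition: (−a) □_{p,n} ⟨b₁,…,bₙ⟩ = −(a □_{p,n} ⟨b₁,…,bₙ⟩). -/
import Mathlib

/- ## The counter-model `M` with `Mₙ = {kₙ, lₙ, 1ₙ,…,nₙ, 1̄ₙ,…,n̄ₙ}` -/

/-- The carrier `Mₙ = {kₙ, lₙ, 1ₙ, …, nₙ, 1̄ₙ, …, n̄ₙ}` (2n+2 distinct elements):
`pr i` is the projection `(i+1)ₙ` and `bar i` is the barred element `(i+1)̄ₙ`. -/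
inductive CM (n : ℕ) : Type
  | k : CM n
  | l : CM n
  | pr : Fin n → CM n
  | bar : Fin n → CM n
deriving DecidableEq

/-- The involution `−`: fixes `kₙ` and `lₙ`, swaps `iₙ` and `īₙ`. -/
def CM.neg {n : ℕ} : CM n → CM n
  | .k => .k
  | .l => .l
  | .pr i => .bar i
  | .bar i => .pr i

/-- Composition `a □_{p,n} ⟨b₁,…,bₙ⟩`:
`kₙ □ b = kₚ`, `lₙ □ b = lₚ`, `iₙ □ b = bᵢ`, `īₙ □ b = −bᵢ`. -/
def CM.comp {n p : ℕ} : CM n → (Fin n → CM p) → CM p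
  | .k, _ => .k
  | .l, _ => .l
  | .pr i, b => b i
  | .bar i, b => (b i).neg

/-- In the counter-model `M`, the involution commutes with composition:
`(−a) □_{p,n} ⟨b₁,…,bₙ⟩ = −(a □_{p,n} ⟨b₁,…,bₙ⟩)`. -/
theorem CM.neg_comp (n p : ℕ) (a : CM n) (b : Fin n → CM p) :
    CM.comp (CM.neg a) b = CM.neg (CM.comp a b) := by
  cases a with
  | k => rfl
  | l => rfl
  | pr i => rfl
  | bar i => simp only [CM.comp, CM.neg]; cases b i <;> rfl
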